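/- Let K be a Markov kernel on a countable set G satisfying condition (*): there exist l ∈ ℕ and ε > 0 such that ‖K^l(x,·) ∧ K^{l+1}(x,·)‖ > ε for every x ∈ G. Then for every v ∈ G and every k ∈ ℕ, lim_{n→∞} ‖K^{n+k}(v,·) − K^n(v,·)‖_TV = 0. -/

import Mathlib

open MeasureTheory ENNReal

namespace CMTPaper

variable {G : Type*}

/-- The `n`-step kernel of a Markov kernel `K` on a countable set `G`:
`K^0(x,·) = δ_x` and `K^{n+1}(x,A) = Σ_y K(x,{y})·K^n(y,A)`. -/
noncomputable def nStep [MeasurableSpace G] (K : G → Measure G) : ℕ → G → Measure G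
  | 0 => fun x => Measure.dirac x
  | n + 1 => fun x => Measure.sum fun y => K x {y} • nStep K n y

/-- A kernel is cycle-free if `K^m(x,{x}) = 0` for every `x` and every `m ≥ 1`. -/
def CycleFree [MeasurableSpace G] (K : G → Measure G) : Prop :=
  ∀ x : G, ∀ m : ℕ, 1 ≤ m → nStep K m x {x} = 0

/-- `P` is the law on path space `G^ℕ` of the Markov chain with kernel `K` started at `x`
(characterized by its finite-dimensional cylinder probabilities). -/
def IsPathLaw [MeasurableSpace G] (K : G → Measure G) (x : G) (P : Measure (ℕ → G)) : Prop :=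
  ∀ (n : ℕ) (u : ℕ → G), u 0 = x →
    P {ω | ∀ i ≤ n, ω i = u i} = ∏ i ∈ Finset.range n, K (u i) {u (i + 1)}

/-- The set of collisions of two paths: pairs `(m,n)` with `m,n ≥ 1` and `ω m = ω' n`. -/
def collisions (ω ω' : ℕ → G) : Set (ℕ × ℕ) :=
  {p : ℕ × ℕ | 1 ≤ p.1 ∧ 1 ≤ p.2 ∧ ω p.1 = ω' p.2}

/-- `μ` is the law on `G^G` of the coalescing Markov trajectories (CMT) with kernel `K`,
i.e. the product measure `⊗_x K(x,·)` (characterized on cylinders). -/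
def IsCMTLaw [MeasurableSpace G] (K : G → Measure G) (μ : Measure (G → G)) : Prop :=
  ∀ (s : Finset G) (u : G → G), μ {f | ∀ x ∈ s, f x = u x} = ∏ x ∈ s, K x {u x}

/-- Adjacency in the graph of `f`: an edge between `x` and `f x` for every `x`. -/
def Adj (f : G → G) (a b : G) : Prop := f a = b ∨ f b = a

/-- `a` and `b` lie in the same connected component of the graph of `f`. -/
def SameComponent (f : G → G) (a b : G) : Prop := Relation.ReflTransGen (Adj f) a b

/-- The connected component of `v` in the graph of `f`. -/
def component (f : G → G) (v : G) : Set G := {u | SameComponent f u v}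

/-- The level set of `v`: points whose forward orbit merges with that of `v` after the same
number of steps. -/
def levelSet (f : G → G) (v : G) : Set G := {w | ∃ n : ℕ, f^[n] w = f^[n] v}

/-- The ancestor-line map `π (v, f) = (f^{(n)}(v))_{n ≥ 0}`. -/
def ancLine : G × (G → G) → ℕ → G := fun p n => p.2^[n] p.1

/-- Total-variation distance between two measures on a countable discrete space. -/
noncomputable def tvDist [MeasurableSpace G] (ν₁ ν₂ : Measure G) : ℝ≥0∞ :=
  ∑' y : G, ((ν₁ {y} - ν₂ {y}) + (ν₂ {y} - ν₁ {y}))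

/-- The mass `‖ν₁ ∧ ν₂‖ = Σ_y min(ν₁{y}, ν₂{y})` of the meet of two measures. -/
noncomputable def meetMass [MeasurableSpace G] (ν₁ ν₂ : Measure G) : ℝ≥0∞ :=
  ∑' y : G, min (ν₁ {y}) (ν₂ {y})

/-- The shift on path space, `σ (x_i)_{i≥0} = (x_{i+1})_{i≥0}`. -/
def shift : (ℕ → G) → ℕ → G := fun ω i => ω (i + 1)

/-- An invariant path property: a measurable shift-invariant subset of path space. -/
def IsInvariantPathProperty [MeasurableSpace G] (A : Set (ℕ → G)) : Prop :=
  MeasurableSet A ∧ shift ⁻¹' A = A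

/-- The tail σ-algebra `⋂_n σ((x_i)_{i ≥ n})` on path space. -/
def tailMS (G : Type*) [MeasurableSpace G] : MeasurableSpace (ℕ → G) :=
  ⨅ n : ℕ, MeasurableSpace.comap (fun ω : ℕ → G => fun i => ω (n + i)) inferInstance

/-- A tail path property: a set in the tail σ-algebra of path space. -/
def IsTailPathProperty [MeasurableSpace G] (A : Set (ℕ → G)) : Prop :=
  MeasurableSet[tailMS G] A

/-- A function `h` is `K`-harmonic if `h(x) = Σ_y K(x,{y}) h(y)` for every `x`. -/
def IsKHarmonic [MeasurableSpace G] (K : G → Measure G) (h : G → ℝ) : Prop :=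
  ∀ x : G, h x = ∑' y : G, (K x {y}).toReal * h y

/-- `K` has the Liouville property: every bounded `K`-harmonic function is constant. -/
def LiouvilleProperty [MeasurableSpace G] (K : G → Measure G) : Prop :=
  ∀ h : G → ℝ, (∃ C : ℝ, ∀ x, |h x| ≤ C) → IsKHarmonic K h → ∀ x y : G, h x = h y

/-!
By (*) we may write `K^l = R + A` and `K^{l+1} = R + B` with sub-kernels `R, A, B`, where the
common part `R(x,·)` has mass exactly `c = 1/M` for every `x`. Since powers of `K` commute,
choosing which `j` of the `n` factors are `K^{l+1}` and expanding every factor shows that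
`C(n,j) K^{nl+j}` is a sum over words of length `n` in `R, A, B` of the product of the letters,
weighted by `C(s, j - d)`, where `s` counts the letters `R` and `d` the letters `B`. The words are
the same for `j` and `j + 1`, so `‖K^{nl+j}(x,·) ∧ K^{nl+j+1}(x,·)‖` is at least the total mass of
the smaller of the two normalized weights. Under these weights `s` and `d` are binomially
distributed; for `n = 2j` and `j = M m³` the ratio of the weights is at least `1 - 4/m` except on
words of mass `O(1/m)` (Chebyshev), so the meet is at least `1 - 7/m` uniformly in `x`. The total
variation to the next step does not increase along the chain, and the triangle inequality passes
from one step to `k` steps.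
-/

open Filter Topology

section ENNRealSums

variable {ι : Type*}

lemma tsum_mul_tsub_le (w f g : ι → ℝ≥0∞) :
    ∑' i, w i * f i - ∑' i, w i * g i ≤ ∑' i, w i * (f i - g i) := by
  rw [tsub_le_iff_right, ← ENNReal.tsum_add]
  exact ENNReal.tsum_le_tsum fun i => by rw [← mul_add]; gcongr; exact le_tsub_add

lemma tsum_tsub_of_le {f g : ι → ℝ≥0∞} (h : ∀ i, g i ≤ f i) (hg : ∑' i, g i ≠ ∞) :
    ∑' i, (f i - g i) = ∑' i, f i - ∑' i, g i := by
  refine ENNReal.eq_sub_of_add_eq hg ?_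
  rw [← ENNReal.tsum_add]
  exact tsum_congr fun i => tsub_add_cancel_of_le (h i)

end ENNRealSums

section TotalVariation

variable [MeasurableSpace G]

lemma tvDist_comm (ν₁ ν₂ : Measure G) : tvDist ν₁ ν₂ = tvDist ν₂ ν₁ := by
  simp only [tvDist, add_comm]

@[simp]
lemma tvDist_self (ν : Measure G) : tvDist ν ν = 0 := by
  simp [tvDist]

lemma tvDist_triangle (ν₁ ν₂ ν₃ : Measure G) :
    tvDist ν₁ ν₃ ≤ tvDist ν₁ ν₂ + tvDist ν₂ ν₃ := by
  rw [tvDist, tvDist, tvDist, ← ENNReal.tsum_add]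
  refine ENNReal.tsum_le_tsum fun y => ?_
  calc (ν₁ {y} - ν₃ {y}) + (ν₃ {y} - ν₁ {y})
      ≤ ((ν₁ {y} - ν₂ {y}) + (ν₂ {y} - ν₃ {y})) + ((ν₃ {y} - ν₂ {y}) + (ν₂ {y} - ν₁ {y})) :=
        add_le_add tsub_le_tsub_add_tsub tsub_le_tsub_add_tsub
    _ = _ := by ring

lemma tvDist_le_sum_succ (ν : ℕ → Measure G) (n k : ℕ) :
    tvDist (ν (n + k)) (ν n) ≤ ∑ i ∈ Finset.range k, tvDist (ν (n + i)) (ν (n + i + 1)) := by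
  induction k with
  | zero => simp
  | succ k ih =>
    calc tvDist (ν (n + (k + 1))) (ν n)
        ≤ tvDist (ν (n + k)) (ν (n + k + 1)) + tvDist (ν (n + k)) (ν n) := by
          rw [tvDist_comm (ν (n + k))]
          exact tvDist_triangle _ _ _
      _ ≤ _ := by
          rw [Finset.sum_range_succ, add_comm]
          gcongr

lemma tsub_add_tsub_add_two_mul_min (a b : ℝ≥0∞) :
    (a - b) + (b - a) + 2 * min a b = a + b := by
  rcases le_total a b with h | h
  · rw [tsub_eq_zero_of_le h, min_eq_left h, zero_add, two_mul, ← add_assoc,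
      tsub_add_cancel_of_le h, add_comm]
  · rw [tsub_eq_zero_of_le h, min_eq_right h, add_zero, two_mul, ← add_assoc,
      tsub_add_cancel_of_le h]

variable [Countable G] [MeasurableSingletonClass G]

lemma tsum_measure_singleton (μ : Measure G) : ∑' y, μ {y} = μ Set.univ := by
  simpa using μ.tsum_indicator_apply_singleton Set.univ MeasurableSet.univ

lemma tvDist_add_two_mul_meetMass (ν₁ ν₂ : Measure G) [IsProbabilityMeasure ν₁]
    [IsProbabilityMeasure ν₂] :
    tvDist ν₁ ν₂ + 2 * meetMass ν₁ ν₂ = 2 := by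
  rw [tvDist, meetMass, ← ENNReal.tsum_mul_left, ← ENNReal.tsum_add]
  simp_rw [tsub_add_tsub_add_two_mul_min]
  rw [ENNReal.tsum_add, tsum_measure_singleton, tsum_measure_singleton]
  simp [one_add_one_eq_two]

end TotalVariation

section CommonPart

variable {ι : Type*}

noncomputable def commonPart (c : ℝ≥0∞) (p q : ι → ℝ≥0∞) (y : ι) : ℝ≥0∞ :=
  c / (∑' z, min (p z) (q z)) * min (p y) (q y)

variable {c : ℝ≥0∞} {p q : ι → ℝ≥0∞}

lemma commonPart_le_min (hc : c ≤ ∑' z, min (p z) (q z)) (y : ι) :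
    commonPart c p q y ≤ min (p y) (q y) :=
  mul_le_of_le_one_left' (ENNReal.div_le_of_le_mul (by rwa [one_mul]))

lemma tsum_commonPart (hc₀ : c ≠ 0) (hc : c ≤ ∑' z, min (p z) (q z))
    (hfin : ∑' z, min (p z) (q z) ≠ ∞) : ∑' y, commonPart c p q y = c := by
  unfold commonPart
  rw [ENNReal.tsum_mul_left,
    ENNReal.div_mul_cancel (pos_iff_ne_zero.1 ((pos_iff_ne_zero.2 hc₀).trans_le hc)) hfin]

end CommonPart

noncomputable def transProb [MeasurableSpace G] (K : G → Measure G) (n : ℕ) (x y : G) : ℝ≥0∞ :=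
  nStep K n x {y}

section TransitionProbabilities

variable [MeasurableSpace G] [MeasurableSingletonClass G] (K : G → Measure G)

open Classical in
lemma transProb_zero (x y : G) : transProb K 0 x y = if x = y then 1 else 0 := by
  simp [transProb, nStep, Set.indicator]

lemma transProb_succ (n : ℕ) (x y : G) :
    transProb K (n + 1) x y = ∑' z, K x {z} * transProb K n z y := by
  simp [transProb, nStep, Measure.sum_apply _ (measurableSet_singleton y)]

theorem transProb_add (m n : ℕ) (x y : G) :
    transProb K (m + n) x y = ∑' z, transProb K m x z * transProb K n z y := by
  induction m generalizing x with
  | zero =>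
    classical
    simp [transProb_zero, ite_mul]
  | succ m ih =>
    calc transProb K (m + 1 + n) x y
        = ∑' w, ∑' z, K x {w} * (transProb K m w z * transProb K n z y) := by
          rw [Nat.add_right_comm, transProb_succ]
          simp_rw [ih, ENNReal.tsum_mul_left]
      _ = ∑' z, transProb K (m + 1) x z * transProb K n z y := by
          rw [ENNReal.tsum_comm]
          simp_rw [transProb_succ, ← ENNReal.tsum_mul_right, mul_assoc]

end TransitionProbabilities

section Markov

variable [Countable G] [MeasurableSpace G] [MeasurableSingletonClass G] {K : G → Measure G}

lemma isProbabilityMeasure_nStep (hK : ∀ x, IsProbabilityMeasure (K x)) (n : ℕ) (x : G) :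
    IsProbabilityMeasure (nStep K n x) := by
  induction n generalizing x with
  | zero => exact Measure.dirac.isProbabilityMeasure
  | succ n ih =>
    constructor
    simp [nStep, Measure.sum_apply _ MeasurableSet.univ, tsum_measure_singleton]

lemma tsum_transProb (hK : ∀ x, IsProbabilityMeasure (K x)) (n : ℕ) (x : G) :
    ∑' y, transProb K n x y = 1 := by
  have := isProbabilityMeasure_nStep hK n x
  simp [transProb, tsum_measure_singleton]

theorem tvDist_nStep_add_le (hK : ∀ x, IsProbabilityMeasure (K x)) {N N' : ℕ} {B : ℝ≥0∞}
    (hB : ∀ x, tvDist (nStep K N x) (nStep K N' x) ≤ B) (a : ℕ) (v : G) :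
    tvDist (nStep K (a + N) v) (nStep K (a + N') v) ≤ B := by
  change ∑' y, ((transProb K (a + N) v y - transProb K (a + N') v y)
    + (transProb K (a + N') v y - transProb K (a + N) v y)) ≤ B
  simp_rw [transProb_add]
  calc _ ≤ ∑' y, ∑' z, transProb K a v z * ((transProb K N z y - transProb K N' z y)
          + (transProb K N' z y - transProb K N z y)) := by
        refine ENNReal.tsum_le_tsum fun y => ?_
        simp_rw [mul_add]
        rw [ENNReal.tsum_add]
        exact add_le_add (tsum_mul_tsub_le _ _ _) (tsum_mul_tsub_le _ _ _)
    _ = ∑' z, transProb K a v z * tvDist (nStep K N z) (nStep K N' z) := by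
        rw [ENNReal.tsum_comm]
        simp_rw [ENNReal.tsum_mul_left]
        rfl
    _ ≤ ∑' z, transProb K a v z * B := by gcongr with z; exact hB z
    _ = B := by rw [ENNReal.tsum_mul_right, tsum_transProb hK, one_mul]

theorem exists_split_transProb (hK : ∀ x, IsProbabilityMeasure (K x)) {l : ℕ} {c : ℝ}
    (hc₀ : 0 < c) (hc : ∀ x, ENNReal.ofReal c ≤ meetMass (nStep K l x) (nStep K (l + 1) x)) :
    ∃ R A B : G → G → ℝ≥0∞, (∀ x y, R x y + A x y = transProb K l x y)
      ∧ (∀ x y, R x y + B x y = transProb K (l + 1) x y) ∧ (∀ x, ∑' y, R x y = ENNReal.ofReal c)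
      ∧ (∀ x, ∑' y, A x y = ENNReal.ofReal (1 - c))
      ∧ (∀ x, ∑' y, B x y = ENNReal.ofReal (1 - c)) := by
  set R : G → G → ℝ≥0∞ := fun x => commonPart (ENNReal.ofReal c) (transProb K l x)
    (transProb K (l + 1) x)
  have hR : ∀ x y, R x y ≤ min (transProb K l x y) (transProb K (l + 1) x y) :=
    fun x => commonPart_le_min (hc x)
  have hRmass : ∀ x, ∑' y, R x y = ENNReal.ofReal c := by
    refine fun x => tsum_commonPart (by simpa using hc₀) (hc x) (ne_top_of_le_ne_top
      ENNReal.one_ne_top ?_)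
    exact (ENNReal.tsum_le_tsum fun y => min_le_left _ _).trans_eq (tsum_transProb hK l x)
  have hres : ∀ i x, (∀ y, R x y ≤ transProb K i x y)
      → ∑' y, (transProb K i x y - R x y) = ENNReal.ofReal (1 - c) := by
    intro i x hle
    rw [tsum_tsub_of_le hle (by simp [hRmass]), tsum_transProb hK, hRmass,
      ENNReal.ofReal_sub _ hc₀.le, ENNReal.ofReal_one]
  refine ⟨R, fun x y => transProb K l x y - R x y, fun x y => transProb K (l + 1) x y - R x y,
    fun x y => add_tsub_cancel_of_le ((hR x y).trans (min_le_left _ _)),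
    fun x y => add_tsub_cancel_of_le ((hR x y).trans (min_le_right _ _)), hRmass,
    fun x => hres l x fun y => (hR x y).trans (min_le_left _ _),
    fun x => hres (l + 1) x fun y => (hR x y).trans (min_le_right _ _)⟩

end Markov

section WordKernel

variable {ι : Type*} (R A B : ι → ι → ℝ≥0∞)

open Classical in
/-- `wordKernel R A B n g x y` is the sum, over all words `w` of length `n` in the letters
`R, A, B`, of `g s d` times the `(x, y)` entry of the product of the letters of `w`, where `s` and
`d` are the numbers of letters `R` and `B` in `w`. -/
noncomputable def wordKernel : ℕ → (ℕ → ℕ → ℝ≥0∞) → ι → ι → ℝ≥0∞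
  | 0, g => fun x y => if x = y then g 0 0 else 0
  | n + 1, g => fun x y => ∑' z, (R x z * wordKernel n (fun s d => g (s + 1) d) z y
      + A x z * wordKernel n g z y + B x z * wordKernel n (fun s d => g s (d + 1)) z y)

variable {R A B}

lemma wordKernel_mono {f g : ℕ → ℕ → ℝ≥0∞} (h : ∀ s d, f s d ≤ g s d) (n : ℕ) (x y : ι) :
    wordKernel R A B n f x y ≤ wordKernel R A B n g x y := by
  induction n generalizing f g x with
  | zero => simp only [wordKernel]; split_ifs <;> simp [h]
  | succ n ih =>
    simp only [wordKernel]
    gcongr with z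
    exacts [ih (fun s d => h _ _) _, ih h _, ih (fun s d => h _ _) _]

lemma wordKernel_add (n : ℕ) (f g : ℕ → ℕ → ℝ≥0∞) (x y : ι) :
    wordKernel R A B n (fun s d => f s d + g s d) x y
      = wordKernel R A B n f x y + wordKernel R A B n g x y := by
  induction n generalizing f g x with
  | zero => simp only [wordKernel]; split_ifs <;> simp
  | succ n ih =>
    simp only [wordKernel, ih, ← ENNReal.tsum_add]
    congr 1 with z
    ring

lemma wordKernel_const_mul (n : ℕ) (a : ℝ≥0∞) (g : ℕ → ℕ → ℝ≥0∞) (x y : ι) :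
    wordKernel R A B n (fun s d => a * g s d) x y = a * wordKernel R A B n g x y := by
  induction n generalizing g x with
  | zero => simp only [wordKernel]; split_ifs <;> simp
  | succ n ih =>
    simp only [wordKernel, ih, ← ENNReal.tsum_mul_left]
    congr 1 with z
    ring

@[simp]
lemma wordKernel_const_zero (n : ℕ) (x y : ι) : wordKernel R A B n (fun _ _ => 0) x y = 0 := by
  simpa using wordKernel_const_mul (R := R) (A := A) (B := B) n 0 (fun _ _ => 0) x y

end WordKernel

section WordCoeff

/-- Expanding `K^l = R + A` and `K^{l+1} = R + B` in a product of `n` such factors, `j` of which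
are `K^{l+1}`, a word with `s` letters `R` and `d` letters `B` arises from `C(s, j - d)` choices
of the `j` factors: all `d` positions of `B` and `j - d` of the positions of `R`. -/
def wordCoeff (j s d : ℕ) : ℕ := if d ≤ j then s.choose (j - d) else 0

lemma wordCoeff_zero_left (s d : ℕ) : wordCoeff 0 s d = if d = 0 then 1 else 0 := by
  by_cases hd : d = 0 <;> simp [wordCoeff, hd]

lemma wordCoeff_succ_pascal (j s d : ℕ) :
    wordCoeff (j + 1) (s + 1) d = wordCoeff (j + 1) s d + wordCoeff j s d := by
  unfold wordCoeff
  rcases lt_trichotomy d (j + 1) with h | rfl | h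
  · rw [if_pos h.le, if_pos h.le, if_pos (by omega), Nat.sub_add_comm (by omega),
      Nat.choose_succ_succ', add_comm]
  · simp
  · rw [if_neg (by omega), if_neg (by omega), if_neg (by omega)]

lemma wordCoeff_succ_succ (j s d : ℕ) : wordCoeff (j + 1) s (d + 1) = wordCoeff j s d := by
  simp [wordCoeff]

end WordCoeff

section WordExpansion

variable [MeasurableSpace G] [MeasurableSingletonClass G] {K : G → Measure G} {l : ℕ}
  {R A B : G → G → ℝ≥0∞}

theorem choose_mul_transProb_eq_wordKernel (hA : ∀ x y, R x y + A x y = transProb K l x y)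
    (hB : ∀ x y, R x y + B x y = transProb K (l + 1) x y) (n j : ℕ) (x y : G) :
    (n.choose j : ℝ≥0∞) * transProb K (n * l + j) x y
      = wordKernel R A B n (fun s d => (wordCoeff j s d : ℝ≥0∞)) x y := by
  induction n generalizing j x with
  | zero =>
    classical
    cases j <;> simp [transProb_zero, wordKernel, wordCoeff]
  | succ n ih =>
    cases j with
    | zero =>
      have hW : ∀ z, wordKernel R A B n (fun s d => (wordCoeff 0 s d : ℝ≥0∞)) z y
          = transProb K (n * l) z y := fun z => by simpa using (ih 0 z).symm
      have hshift : (fun s d => (wordCoeff 0 (s + 1) d : ℝ≥0∞))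
          = fun s d => (wordCoeff 0 s d : ℝ≥0∞) := by
        simp [wordCoeff_zero_left]
      have hkill : (fun s d => (wordCoeff 0 s (d + 1) : ℝ≥0∞)) = fun _ _ => 0 := by
        simp [wordCoeff_zero_left]
      rw [Nat.choose_zero_right, Nat.cast_one, one_mul, add_zero, Nat.succ_mul, add_comm,
        transProb_add]
      simp only [wordKernel, hshift, hkill, wordKernel_const_zero, mul_zero, add_zero, hW,
        ← add_mul, hA]
    | succ j =>
      have hsplit₁ : transProb K ((n + 1) * l + (j + 1)) x y
          = ∑' z, transProb K (l + 1) x z * transProb K (n * l + j) z y := by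
        rw [← transProb_add]; congr 1; ring
      have hsplit₂ : transProb K ((n + 1) * l + (j + 1)) x y
          = ∑' z, transProb K l x z * transProb K (n * l + (j + 1)) z y := by
        rw [← transProb_add]; congr 1; ring
      calc ((n + 1).choose (j + 1) : ℝ≥0∞) * transProb K ((n + 1) * l + (j + 1)) x y
          = ∑' z, (transProb K (l + 1) x z * ((n.choose j : ℝ≥0∞) * transProb K (n * l + j) z y)
              + transProb K l x z
                * ((n.choose (j + 1) : ℝ≥0∞) * transProb K (n * l + (j + 1)) z y)) := by
            rw [Nat.choose_succ_succ', Nat.cast_add, add_mul]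
            nth_rw 1 [hsplit₁]
            rw [hsplit₂, ← ENNReal.tsum_mul_left, ← ENNReal.tsum_mul_left, ← ENNReal.tsum_add]
            simp only [mul_left_comm]
        _ = _ := by
            simp only [ih, ← hA, ← hB, wordKernel, wordCoeff_succ_pascal, wordCoeff_succ_succ,
              Nat.cast_add, wordKernel_add]
            congr 1 with z
            ring

theorem wordKernel_min_le_mul_min (hA : ∀ x y, R x y + A x y = transProb K l x y)
    (hB : ∀ x y, R x y + B x y = transProb K (l + 1) x y) (n j : ℕ) (x y : G) :
    wordKernel R A B n (fun s d =>
        (min (n.choose (j + 1) * wordCoeff j s d) (n.choose j * wordCoeff (j + 1) s d) : ℕ)) x y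
      ≤ (n.choose j * n.choose (j + 1) : ℕ)
          * min (transProb K (n * l + j) x y) (transProb K (n * l + (j + 1)) x y) := by
  calc _ ≤ min (wordKernel R A B n (fun s d => n.choose (j + 1) * (wordCoeff j s d : ℝ≥0∞)) x y)
          (wordKernel R A B n (fun s d => n.choose j * (wordCoeff (j + 1) s d : ℝ≥0∞)) x y) := by
        refine le_min (wordKernel_mono (fun s d => ?_) _ _ _)
          (wordKernel_mono (fun s d => ?_) _ _ _)
        · exact_mod_cast min_le_left _ _
        · exact_mod_cast min_le_right _ _
    _ = min (n.choose (j + 1) * (n.choose j * transProb K (n * l + j) x y))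
          (n.choose j * (n.choose (j + 1) * transProb K (n * l + (j + 1)) x y)) := by
        rw [wordKernel_const_mul, wordKernel_const_mul,
          ← choose_mul_transProb_eq_wordKernel hA hB, ← choose_mul_transProb_eq_wordKernel hA hB]
    _ = _ := by rw [Nat.cast_mul, mul_min]; congr 1 <;> ring

end WordExpansion

section WordMass

/-- `∑_w g s_w d_w c^{s_w} (1 - c)^{n - s_w}` over the words `w` of `wordKernel`: its total mass
when every row of `R` has mass `c` and every row of `A` and `B` has mass `1 - c`. -/
noncomputable def wordMass (c : ℝ) : ℕ → (ℕ → ℕ → ℝ) → ℝ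
  | 0, g => g 0 0
  | n + 1, g => c * wordMass c n (fun s d => g (s + 1) d)
      + (1 - c) * (wordMass c n g + wordMass c n (fun s d => g s (d + 1)))

variable {c : ℝ}

lemma wordMass_add (n : ℕ) (f g : ℕ → ℕ → ℝ) :
    wordMass c n (fun s d => f s d + g s d) = wordMass c n f + wordMass c n g := by
  induction n generalizing f g with
  | zero => rfl
  | succ n ih => simp only [wordMass, ih]; ring

lemma wordMass_sub (n : ℕ) (f g : ℕ → ℕ → ℝ) :
    wordMass c n (fun s d => f s d - g s d) = wordMass c n f - wordMass c n g := by
  induction n generalizing f g with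
  | zero => rfl
  | succ n ih => simp only [wordMass, ih]; ring

lemma wordMass_const_mul (n : ℕ) (a : ℝ) (g : ℕ → ℕ → ℝ) :
    wordMass c n (fun s d => a * g s d) = a * wordMass c n g := by
  induction n generalizing g with
  | zero => rfl
  | succ n ih => simp only [wordMass, ih]; ring

@[simp]
lemma wordMass_const_zero (n : ℕ) : wordMass c n (fun _ _ => 0) = 0 := by
  induction n with
  | zero => rfl
  | succ n ih => simp [wordMass, ih]

lemma wordMass_mono (hc₀ : 0 ≤ c) (hc₁ : c ≤ 1) {f g : ℕ → ℕ → ℝ} (h : ∀ s d, f s d ≤ g s d)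
    (n : ℕ) : wordMass c n f ≤ wordMass c n g := by
  induction n generalizing f g with
  | zero => exact h 0 0
  | succ n ih =>
    have hc : 0 ≤ 1 - c := by linarith
    simp only [wordMass]
    gcongr
    exacts [ih fun s d => h _ _, ih h, ih fun s d => h _ _]

lemma wordMass_nonneg (hc₀ : 0 ≤ c) (hc₁ : c ≤ 1) {g : ℕ → ℕ → ℝ} (h : ∀ s d, 0 ≤ g s d)
    (n : ℕ) : 0 ≤ wordMass c n g := by
  simpa using wordMass_mono hc₀ hc₁ (f := fun _ _ => 0) h n

end WordMass

section WordKernelMass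

variable {ι : Type*} {R A B : ι → ι → ℝ≥0∞}

theorem tsum_wordKernel_natCast {c : ℝ} (hc₀ : 0 ≤ c) (hc₁ : c ≤ 1)
    (hR : ∀ x, ∑' y, R x y = ENNReal.ofReal c) (hA : ∀ x, ∑' y, A x y = ENNReal.ofReal (1 - c))
    (hB : ∀ x, ∑' y, B x y = ENNReal.ofReal (1 - c)) (n : ℕ) (f : ℕ → ℕ → ℕ) (x : ι) :
    ∑' y, wordKernel R A B n (fun s d => (f s d : ℝ≥0∞)) x y
      = ENNReal.ofReal (wordMass c n (fun s d => (f s d : ℝ))) := by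
  induction n generalizing f x with
  | zero => classical simp [wordKernel, wordMass]
  | succ n ih =>
    have hnonneg : ∀ g : ℕ → ℕ → ℕ, 0 ≤ wordMass c n (fun s d => (g s d : ℝ)) :=
      fun g => wordMass_nonneg hc₀ hc₁ (fun _ _ => Nat.cast_nonneg _) n
    simp only [wordKernel]
    rw [ENNReal.tsum_comm]
    simp only [ENNReal.tsum_add, ENNReal.tsum_mul_left, ih, ENNReal.tsum_mul_right, hR, hA, hB]
    have hc : 0 ≤ 1 - c := by linarith
    rw [wordMass, ENNReal.ofReal_add (mul_nonneg hc₀ (hnonneg _))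
      (mul_nonneg hc (add_nonneg (hnonneg _) (hnonneg _))), ENNReal.ofReal_mul hc₀,
      ENNReal.ofReal_mul hc, ENNReal.ofReal_add (hnonneg _) (hnonneg _)]
    ring

end WordKernelMass

section Moments

variable {c : ℝ}

lemma wordMass_succ_coeff_zero (n : ℕ) (h : ℕ → ℕ → ℝ) :
    wordMass c (n + 1) (fun s d => wordCoeff 0 s d * h s d)
      = c * wordMass c n (fun s d => wordCoeff 0 s d * h (s + 1) d)
        + (1 - c) * wordMass c n (fun s d => wordCoeff 0 s d * h s d) := by
  simp [wordMass, wordCoeff_zero_left]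

lemma wordMass_succ_coeff_succ (n j : ℕ) (h : ℕ → ℕ → ℝ) :
    wordMass c (n + 1) (fun s d => wordCoeff (j + 1) s d * h s d)
      = c * (wordMass c n (fun s d => wordCoeff (j + 1) s d * h (s + 1) d)
          + wordMass c n (fun s d => wordCoeff j s d * h (s + 1) d))
        + (1 - c) * (wordMass c n (fun s d => wordCoeff (j + 1) s d * h s d)
          + wordMass c n (fun s d => wordCoeff j s d * h s (d + 1))) := by
  simp only [wordMass, wordCoeff_succ_pascal, wordCoeff_succ_succ, Nat.cast_add, add_mul,
    wordMass_add]

lemma wordMass_zero_coeff (j : ℕ) (h : ℕ → ℕ → ℝ) :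
    wordMass c 0 (fun s d => wordCoeff j s d * h s d) = (Nat.choose 0 j) * h 0 0 := by
  simp [wordMass, wordCoeff]

/- Normalized by `C(n, j)`, the weights `wordCoeff j` make `s` a `Bin(n, c)` and `d` a
`j - Bin(j, c)` variable; the next two lemmas are their first two moments. -/

theorem wordMass_coeff_quadratic_fst (n j : ℕ) (a b e : ℝ) :
    wordMass c n (fun s d => wordCoeff j s d * (a * s ^ 2 + b * s + e))
      = n.choose j * (a * (n * c * (1 - c) + (n * c) ^ 2) + b * (n * c) + e) := by
  induction n generalizing j a b e with
  | zero => simp [wordMass_zero_coeff]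
  | succ n ih =>
    have shift : ∀ x : ℝ, a * (x + 1) ^ 2 + b * (x + 1) + e
        = a * x ^ 2 + (2 * a + b) * x + (a + b + e) := fun x => by ring
    cases j with
    | zero =>
      simp only [wordMass_succ_coeff_zero, Nat.cast_add, Nat.cast_one, shift, ih,
        Nat.choose_zero_right]
      ring
    | succ j =>
      simp only [wordMass_succ_coeff_succ, Nat.cast_add, Nat.cast_one, shift, ih,
        Nat.choose_succ_succ']
      ring

theorem wordMass_coeff_quadratic_snd (n j : ℕ) (a b e : ℝ) :
    wordMass c n (fun s d => wordCoeff j s d * (a * d ^ 2 + b * d + e))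
      = n.choose j * (a * (j * c * (1 - c) + (j * (1 - c)) ^ 2) + b * (j * (1 - c)) + e) := by
  induction n generalizing j a b e with
  | zero => cases j <;> simp [wordMass_zero_coeff]
  | succ n ih =>
    have shift : ∀ x : ℝ, a * (x + 1) ^ 2 + b * (x + 1) + e
        = a * x ^ 2 + (2 * a + b) * x + (a + b + e) := fun x => by ring
    cases j with
    | zero =>
      simp only [wordMass_succ_coeff_zero, ih, Nat.choose_zero_right]
      ring
    | succ j =>
      simp only [wordMass_succ_coeff_succ, Nat.cast_add, Nat.cast_one, shift, ih,
        Nat.choose_succ_succ']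
      ring

end Moments

section ScalarEstimate

theorem mul_choose_mul_wordCoeff_le {ρ : ℝ} {j s d : ℕ} (hd : d ≤ j)
    (hρ : ρ * ((j - d : ℕ) + 1 : ℝ) ≤ s - (j - d : ℕ)) :
    ρ * ((2 * j).choose (j + 1) * wordCoeff j s d) ≤ (2 * j).choose j * wordCoeff (j + 1) s d := by
  set u := j - d with hu
  have hj : wordCoeff j s d = s.choose u := by simp [wordCoeff, hd, hu]
  have hj₁ : wordCoeff (j + 1) s d = s.choose (u + 1) := by
    simp [wordCoeff, hd.trans j.le_succ, hu, Nat.sub_add_comm hd]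
  rw [hj, hj₁]
  rcases le_or_gt u s with hus | hsu
  · have hs : (s.choose (u + 1) : ℝ) * (u + 1) = s.choose u * (s - u) := by
      rw [← Nat.cast_sub hus]; exact_mod_cast Nat.choose_succ_right_eq s u
    have hc : ((2 * j).choose (j + 1) : ℝ) * (j + 1) = (2 * j).choose j * j := by
      have := Nat.choose_succ_right_eq (2 * j) j
      rw [show 2 * j - j = j by omega] at this
      exact_mod_cast this
    have hsu : (0 : ℝ) ≤ s - u := by rw [sub_nonneg]; exact_mod_cast hus
    have hA : (0 : ℝ) ≤ (2 * j).choose j * s.choose u := by positivity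
    refine le_of_mul_le_mul_right ?_ (by positivity : (0 : ℝ) < (u + 1) * (j + 1))
    calc ρ * ((2 * j).choose (j + 1) * s.choose u) * ((u + 1) * (j + 1))
        = (ρ * (u + 1)) * ((2 * j).choose j * s.choose u) * j := by
          linear_combination (ρ * s.choose u * (u + 1)) * hc
      _ ≤ (s - u) * ((2 * j).choose j * s.choose u) * j := by gcongr
      _ ≤ (s - u) * ((2 * j).choose j * s.choose u) * (j + 1) := by gcongr; linarith
      _ = _ := by linear_combination (-((2 * j).choose j * (j + 1) : ℝ)) * hs
  · simp [Nat.choose_eq_zero_of_lt hsu]; positivity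

lemma one_lt_sq_div_of_lt_abs {m x : ℝ} (hm : 0 < m) (h : m ^ 2 < |x|) : 1 < x ^ 2 / m ^ 4 := by
  rw [one_lt_div (by positivity)]
  have := sq_lt_sq.mpr (show |m ^ 2| < |x| by rwa [abs_of_pos (by positivity)])
  linarith [show (m ^ 2) ^ 2 = m ^ 4 by ring]

/-- Where `|s - 2m³| ≤ m²` and `|d - (j - m³)| ≤ m²`, the weight of `j + 1` is at least `1 - 4/m`
times that of `j` (for `c = m³/j` these are the means of `s` and `d`); elsewhere one of the square
terms exceeds `1`. -/
theorem mul_wordCoeff_mul_le_min {m : ℕ} (hm : 4 ≤ m) (j s d : ℕ) :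
    ((2 * j).choose (j + 1) * wordCoeff j s d : ℝ)
        * (1 - 4 / m - ((s : ℝ) - 2 * m ^ 3) ^ 2 / m ^ 4 - ((d : ℝ) - (j - m ^ 3)) ^ 2 / m ^ 4)
      ≤ min ((2 * j).choose (j + 1) * wordCoeff j s d : ℝ)
          ((2 * j).choose j * wordCoeff (j + 1) s d) := by
  set X : ℝ := (2 * j).choose (j + 1) * wordCoeff j s d
  have hX : 0 ≤ X := by positivity
  have hm' : (4 : ℝ) ≤ m := by exact_mod_cast hm
  have hm0 : (0 : ℝ) < m := by linarith
  have h4m : 0 ≤ 4 / (m : ℝ) := by positivity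
  by_cases hgood : |(s : ℝ) - 2 * m ^ 3| ≤ (m : ℝ) ^ 2 ∧ |(d : ℝ) - (j - m ^ 3)| ≤ (m : ℝ) ^ 2
  · obtain ⟨hs, hd⟩ := hgood
    rw [abs_le] at hs hd
    have hm23 : (m : ℝ) ^ 2 ≤ m ^ 3 := by nlinarith
    have hdj : d ≤ j := by exact_mod_cast (by linarith : (d : ℝ) ≤ j)
    have hρ : (1 - 4 / m) * ((j - d : ℕ) + 1 : ℝ) ≤ s - (j - d : ℕ) := by
      have hexpand : (4 / m : ℝ) * (m ^ 3 + m ^ 2 + 1) = 4 * m ^ 2 + 4 * m + 4 / m := by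
        field_simp
      rw [Nat.cast_sub hdj]
      calc (1 - 4 / m) * ((j - d : ℝ) + 1) ≤ (1 - 4 / m) * (m ^ 3 + m ^ 2 + 1) := by
            gcongr
            · linarith [show 4 / (m : ℝ) ≤ 1 by rw [div_le_one hm0]; linarith]
            · linarith
        _ ≤ s - (j - d) := by nlinarith
    have hmin : (1 - 4 / m) * X ≤ min X ((2 * j).choose j * wordCoeff (j + 1) s d) :=
      le_min (by nlinarith) (mul_choose_mul_wordCoeff_le hdj hρ)
    refine le_trans (mul_le_mul_of_nonneg_left ?_ hX) (by rw [mul_comm]; exact hmin)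
    have : (0 : ℝ) ≤ ((s : ℝ) - 2 * m ^ 3) ^ 2 / m ^ 4 := by positivity
    have : (0 : ℝ) ≤ ((d : ℝ) - (j - m ^ 3)) ^ 2 / m ^ 4 := by positivity
    linarith
  · have hbad : 1 - 4 / m - ((s : ℝ) - 2 * m ^ 3) ^ 2 / m ^ 4
        - ((d : ℝ) - (j - m ^ 3)) ^ 2 / m ^ 4 ≤ 0 := by
      have : (0 : ℝ) ≤ ((s : ℝ) - 2 * m ^ 3) ^ 2 / m ^ 4 := by positivity
      have : (0 : ℝ) ≤ ((d : ℝ) - (j - m ^ 3)) ^ 2 / m ^ 4 := by positivity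
      rw [not_and_or, not_le, not_le] at hgood
      rcases hgood with h | h <;> linarith [one_lt_sq_div_of_lt_abs hm0 h]
    exact (mul_nonpos_of_nonneg_of_nonpos hX hbad).trans (le_min hX (by positivity))

theorem choose_mul_choose_mul_le_wordMass_min {c : ℝ} (hc₀ : 0 ≤ c) (hc₁ : c ≤ 1) {m j : ℕ}
    (hm : 4 ≤ m) (hjc : j * c = m ^ 3) :
    ((2 * j).choose j * (2 * j).choose (j + 1) : ℝ) * (1 - 7 / m)
      ≤ wordMass c (2 * j) (fun s d => min ((2 * j).choose (j + 1) * wordCoeff j s d : ℝ)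
          ((2 * j).choose j * wordCoeff (j + 1) s d)) := by
  set C : ℝ := ((2 * j).choose j : ℝ)
  set C' : ℝ := ((2 * j).choose (j + 1) : ℝ)
  have hm0 : (0 : ℝ) < m := by positivity
  have hj0 : (j : ℝ) ≠ 0 := by
    rintro hj; rw [hj, zero_mul] at hjc; exact (pow_pos hm0 3).ne hjc
  have hc : c = m ^ 3 / j := by rw [← hjc]; field_simp
  have hsplit : ∀ s d : ℕ, C' * wordCoeff j s d
      * (1 - 4 / m - ((s : ℝ) - 2 * m ^ 3) ^ 2 / m ^ 4 - ((d : ℝ) - (j - m ^ 3)) ^ 2 / m ^ 4)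
      = C' * (wordCoeff j s d * (0 * s ^ 2 + 0 * s + (1 - 4 / m)))
        - C' / m ^ 4 * (wordCoeff j s d * (1 * s ^ 2 + (-4 * m ^ 3) * s + 4 * m ^ 6))
        - C' / m ^ 4 * (wordCoeff j s d
            * (1 * d ^ 2 + (-2 * (j - m ^ 3)) * d + (j - m ^ 3) ^ 2)) := by
    intro s d; field_simp; ring
  have hval : wordMass c (2 * j) (fun s d => C' * wordCoeff j s d
      * (1 - 4 / m - ((s : ℝ) - 2 * m ^ 3) ^ 2 / m ^ 4 - ((d : ℝ) - (j - m ^ 3)) ^ 2 / m ^ 4))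
      = C * C' * (1 - 4 / m - 3 * (1 - c) / m) := by
    simp_rw [hsplit]
    rw [wordMass_sub, wordMass_sub, wordMass_const_mul, wordMass_const_mul, wordMass_const_mul,
      wordMass_coeff_quadratic_fst, wordMass_coeff_quadratic_fst,
      wordMass_coeff_quadratic_snd, hc]
    push_cast
    field_simp
    ring
  calc C * C' * (1 - 7 / m) ≤ C * C' * (1 - 4 / m - 3 * (1 - c) / m) := by
        refine mul_le_mul_of_nonneg_left ?_ (by positivity)
        have : 3 * (1 - c) / m ≤ 3 / m := by gcongr; linarith
        linarith [show (7 : ℝ) / m = 4 / m + 3 / m by ring]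
    _ = _ := hval.symm
    _ ≤ _ := wordMass_mono hc₀ hc₁ (fun s d => mul_wordCoeff_mul_le_min hm j s d) _

end ScalarEstimate

section MeetBound

variable [Countable G] [MeasurableSpace G] [MeasurableSingletonClass G] {K : G → Measure G}

theorem ofReal_le_meetMass_nStep (hK : ∀ x, IsProbabilityMeasure (K x)) {l : ℕ} {c : ℝ}
    (hc₀ : 0 < c) (hc : ∀ x, ENNReal.ofReal c ≤ meetMass (nStep K l x) (nStep K (l + 1) x))
    {m j : ℕ} (hm : 4 ≤ m) (hjc : j * c = m ^ 3) (x : G) :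
    ENNReal.ofReal (1 - 7 / m)
      ≤ meetMass (nStep K (2 * j * l + j) x) (nStep K (2 * j * l + (j + 1)) x) := by
  obtain ⟨R, A, B, hA, hB, hRm, hAm, hBm⟩ := exists_split_transProb hK hc₀ hc
  have hc₁ : c ≤ 1 := by
    have := (hc x).trans ((ENNReal.tsum_le_tsum fun y => min_le_left _ _).trans_eq
      (tsum_transProb hK l x))
    rwa [ENNReal.ofReal_le_one] at this
  set C := (2 * j).choose j
  set C' := (2 * j).choose (j + 1)
  set f : ℕ → ℕ → ℕ := fun s d => min (C' * wordCoeff j s d) (C * wordCoeff (j + 1) s d)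
  have hj : j ≠ 0 := by
    rintro rfl
    simp only [CharP.cast_eq_zero, zero_mul] at hjc
    exact pow_ne_zero 3 (by omega : m ≠ 0) (by exact_mod_cast hjc.symm)
  have hCpos : (0 : ℝ≥0∞) < (C * C' : ℕ) := by
    exact_mod_cast Nat.mul_pos (Nat.choose_pos (by omega)) (Nat.choose_pos (by omega))
  refine (ENNReal.mul_le_mul_iff_right hCpos.ne' (ENNReal.natCast_ne_top _)).1 ?_
  calc ((C * C' : ℕ) : ℝ≥0∞) * ENNReal.ofReal (1 - 7 / m)
      = ENNReal.ofReal ((C * C' : ℝ) * (1 - 7 / m)) := by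
        rw [ENNReal.ofReal_mul (by positivity)]; norm_cast
    _ ≤ ENNReal.ofReal (wordMass c (2 * j) (fun s d => (f s d : ℝ))) := by
        refine ENNReal.ofReal_le_ofReal ?_
        convert choose_mul_choose_mul_le_wordMass_min hc₀.le hc₁ hm hjc using 3
        simp [f, C, C']
    _ = ∑' y, wordKernel R A B (2 * j) (fun s d => (f s d : ℝ≥0∞)) x y :=
        (tsum_wordKernel_natCast hc₀.le hc₁ hRm hAm hBm _ f x).symm
    _ ≤ _ := (ENNReal.tsum_le_tsum fun y => wordKernel_min_le_mul_min hA hB _ j x y).trans_eq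
          ENNReal.tsum_mul_left

end MeetBound

section Convergence

lemma tendsto_tvDist_add_of_tendsto_tvDist_succ [MeasurableSpace G] (ν : ℕ → Measure G)
    (h : Tendsto (fun n => tvDist (ν n) (ν (n + 1))) atTop (𝓝 0)) (k : ℕ) :
    Tendsto (fun n => tvDist (ν (n + k)) (ν n)) atTop (𝓝 0) := by
  have hsum : Tendsto (fun n => ∑ i ∈ Finset.range k, tvDist (ν (n + i)) (ν (n + i + 1)))
      atTop (𝓝 0) := by
    simpa using tendsto_finsetSum (Finset.range k) fun i _ => (tendsto_add_atTop_iff_nat i).2 h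
  exact tendsto_of_tendsto_of_tendsto_of_le_of_le tendsto_const_nhds hsum (fun _ => zero_le)
    (fun n => tvDist_le_sum_succ ν n k)

variable [Countable G] [MeasurableSpace G] [MeasurableSingletonClass G] {K : G → Measure G}

theorem tvDist_nStep_succ_le (hK : ∀ x, IsProbabilityMeasure (K x)) {l : ℕ} {c : ℝ}
    (hc₀ : 0 < c) (hc : ∀ x, ENNReal.ofReal c ≤ meetMass (nStep K l x) (nStep K (l + 1) x))
    {m j : ℕ} (hm : 4 ≤ m) (hjc : j * c = m ^ 3) (x : G) :
    tvDist (nStep K (2 * j * l + j) x) (nStep K (2 * j * l + j + 1) x)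
      ≤ ENNReal.ofReal (14 / m) := by
  have := isProbabilityMeasure_nStep hK
  have hsum := tvDist_add_two_mul_meetMass (nStep K (2 * j * l + j) x)
    (nStep K (2 * j * l + j + 1) x)
  rw [ENNReal.eq_sub_of_add_eq (ne_top_of_le_ne_top (by simp) (hsum ▸ le_add_self)) hsum,
    tsub_le_iff_right]
  calc (2 : ℝ≥0∞) = ENNReal.ofReal (14 / m + 2 * (1 - 7 / m)) := by ring_nf; simp
    _ ≤ ENNReal.ofReal (14 / m) + 2 * ENNReal.ofReal (1 - 7 / m) := by
        refine ENNReal.ofReal_add_le.trans_eq ?_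
        rw [ENNReal.ofReal_mul zero_le_two, ENNReal.ofReal_ofNat]
    _ ≤ _ := by gcongr; exact ofReal_le_meetMass_nStep hK hc₀ hc hm hjc x

theorem tendsto_tvDist_nStep_succ (hK : ∀ x, IsProbabilityMeasure (K x))
    (h : ∀ η > 0, ∃ N, ∀ x, tvDist (nStep K N x) (nStep K (N + 1) x) ≤ η) (v : G) :
    Tendsto (fun n => tvDist (nStep K n v) (nStep K (n + 1) v)) atTop (𝓝 0) := by
  refine ENNReal.tendsto_nhds_zero.2 fun η hη => ?_
  obtain ⟨N, hN⟩ := h η hη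
  filter_upwards [eventually_ge_atTop N] with n hn
  obtain ⟨a, rfl⟩ := Nat.exists_eq_add_of_le' hn
  exact tvDist_nStep_add_le hK hN a v

theorem exists_tvDist_nStep_succ_le (hK : ∀ x, IsProbabilityMeasure (K x)) {l M : ℕ}
    (hM : 0 < M)
    (hc : ∀ x, (M : ℝ≥0∞)⁻¹ ≤ meetMass (nStep K l x) (nStep K (l + 1) x)) {η : ℝ≥0∞}
    (hη : 0 < η) : ∃ N, ∀ x, tvDist (nStep K N x) (nStep K (N + 1) x) ≤ η := by
  have hlim : Tendsto (fun m : ℕ => ENNReal.ofReal (14 / m)) atTop (𝓝 0) := by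
    simpa using ENNReal.tendsto_ofReal (tendsto_const_div_atTop_nhds_zero_nat 14)
  obtain ⟨m, hmη, hm⟩ := ((hlim.eventually (gt_mem_nhds hη)).and (eventually_ge_atTop 4)).exists
  have hc' : ∀ x, ENNReal.ofReal (M : ℝ)⁻¹ ≤ meetMass (nStep K l x) (nStep K (l + 1) x) := by
    simpa [ENNReal.ofReal_inv_of_pos (Nat.cast_pos.2 hM)] using hc
  have hjc : ((M * m ^ 3 : ℕ) : ℝ) * (M : ℝ)⁻¹ = m ^ 3 := by
    push_cast; field_simp
  exact ⟨_, fun x => (tvDist_nStep_succ_le hK (by positivity) hc' hm hjc x).trans hmη.le⟩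

end Convergence

/-- Under condition (*), the total variation distance between `K^{n+k}(v,·)`
and `K^n(v,·)` tends to `0` for every `v` and `k`. -/
theorem tv_convergence_of_condition_star
    [Countable G] [MeasurableSpace G] [MeasurableSingletonClass G]
    (K : G → Measure G) (hK : ∀ x, IsProbabilityMeasure (K x))
    (hstar : ∃ (l : ℕ) (ε : ℝ≥0∞), 0 < ε ∧
      ∀ x : G, ε < meetMass (nStep K l x) (nStep K (l + 1) x)) :
    ∀ (v : G) (k : ℕ),
      Filter.Tendsto (fun n : ℕ => tvDist (nStep K (n + k) v) (nStep K n v))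
        Filter.atTop (nhds 0) := by
  obtain ⟨l, ε, hε, hmeet⟩ := hstar
  obtain ⟨M, hM⟩ := ENNReal.exists_inv_nat_lt hε.ne'
  have hc : ∀ x, ((M + 1 : ℕ) : ℝ≥0∞)⁻¹ ≤ meetMass (nStep K l x) (nStep K (l + 1) x) :=
    fun x => (ENNReal.inv_le_inv.2 (by exact_mod_cast M.le_succ)).trans (hM.trans (hmeet x)).le
  intro v k
  exact tendsto_tvDist_add_of_tendsto_tvDist_succ (fun n => nStep K n v)
    (tendsto_tvDist_nStep_succ hK (fun _ hη => exists_tvDist_nStep_succ_le hK M.succ_pos hc hη) v)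
    k

end CMTPaper
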